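/- RD-diamond for the Call-by-Name unbiased strategy: for all λ-terms M, M₁, M₂, if M ⊳ M₁ and M ⊳ M₂, then either M₁ = M₂ or there exists a term U with M₁ ⊳ U and M₂ ⊳ U. -/
import Mathlib


/-- Untyped λ-terms in de Bruijn representation. -/
inductive Tm : Type
  | var : ℕ → Tm
  | lam : Tm → Tm
  | app : Tm → Tm → Tm
deriving DecidableEq

namespace Tm

/-- Lift (shift by one) the free variables of index `≥ d`. -/
def lift (d : ℕ) : Tm → Tm
  | var n => if n < d then var n else var (n + 1)
  | lam M => lam (lift (d + 1) M)
  | app M N => app (lift d M) (lift d N)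

/-- Capture-avoiding substitution `M[N/k]` of `N` for the free variable `k` in `M`. -/
def subst : Tm → ℕ → Tm → Tm
  | var n, k, N => if n = k then N else if k < n then var (n - 1) else var n
  | lam M, k, N => lam (subst M (k + 1) (lift 0 N))
  | app M₁ M₂, k, N => app (subst M₁ k N) (subst M₂ k N)

end Tm

/-- β-reduction: the closure of the root rule `(λx.M)N ↦β M[N/x]` under arbitrary contexts. -/
inductive Beta : Tm → Tm → Prop
  | beta (M N : Tm) : Beta (Tm.app (Tm.lam M) N) (M.subst 0 N)
  | lam {M M'} : Beta M M' → Beta (Tm.lam M) (Tm.lam M')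
  | appL {M M' N} : Beta M M' → Beta (Tm.app M N) (Tm.app M' N)
  | appR {M N N'} : Beta N N' → Beta (Tm.app M N) (Tm.app M N')

/-- Head reduction: the closure of `↦β` under head contexts `H ::= ⟨⟩ | λx.H | H M`. -/
inductive Head : Tm → Tm → Prop
  | beta (M N : Tm) : Head (Tm.app (Tm.lam M) N) (M.subst 0 N)
  | lam {M M'} : Head M M' → Head (Tm.lam M) (Tm.lam M')
  | appL {M M' N} : Head M M' → Head (Tm.app M N) (Tm.app M' N)

/-- The unbiased strategy `⊳`: perform head steps as long as possible; once the term has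
no head redex, iterate in the subterms (in arbitrary order). -/
inductive Unb : Tm → Tm → Prop
  | head {M M'} : Head M M' → Unb M M'
  | lam {P P'} : (∀ s, ¬ Head (Tm.lam P) s) → Unb P P' → Unb (Tm.lam P) (Tm.lam P')
  | appL {P P' Q} : (∀ s, ¬ Head (Tm.app P Q) s) → Unb P P' →
      Unb (Tm.app P Q) (Tm.app P' Q)
  | appR {P Q Q'} : (∀ s, ¬ Head (Tm.app P Q) s) → Unb Q Q' →
      Unb (Tm.app P Q) (Tm.app P Q')

namespace Tm

theorem lift_lift (M : Tm) : ∀ i j, i ≤ j →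
    lift i (lift j M) = lift (j + 1) (lift i M) := by
  induction M with
  | var n =>
    intro i j hij
    simp only [lift]
    split_ifs <;> simp only [lift] <;> split_ifs <;>
      first | rfl | omega | (exfalso; omega) | (congr 1; omega)
  | lam M ih =>
    intro i j hij
    simp only [lift, ih (i+1) (j+1) (by omega)]
  | app A B ihA ihB =>
    intro i j hij
    simp only [lift, ihA i j hij, ihB i j hij]

theorem subst_lift (M : Tm) : ∀ k N, (lift k M).subst k N = M := by
  induction M with
  | var n =>
    intro k N
    simp only [lift]
    split_ifs <;> simp only [subst] <;> split_ifs <;>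
      first | rfl | omega | (exfalso; omega) | (congr 1; omega)
  | lam M ih =>
    intro k N
    simp only [lift, subst, ih (k+1) (lift 0 N)]
  | app A B ihA ihB =>
    intro k N
    simp only [lift, subst, ihA, ihB]

theorem lift_subst (M : Tm) : ∀ i k N, i ≤ k →
    lift i (M.subst k N) = (lift i M).subst (k + 1) (lift i N) := by
  induction M with
  | var n =>
    intro i k N hik
    simp only [subst, lift]
    split_ifs <;> simp only [subst, lift] <;> split_ifs <;>
      first | rfl | omega | (exfalso; omega) | (congr 1; omega)
  | lam M ih =>
    intro i k N hik
    simp only [subst, lift, ih (i+1) (k+1) (lift 0 N) (by omega),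
      lift_lift N 0 i (Nat.zero_le i)]
  | app A B ihA ihB =>
    intro i k N hik
    simp only [subst, lift, ihA i k N hik, ihB i k N hik]

theorem subst_subst (M : Tm) : ∀ j k B N, j ≤ k →
    (M.subst j B).subst k N
      = (M.subst (k + 1) (lift j N)).subst j (B.subst k N) := by
  induction M with
  | var n =>
    intro j k B N hjk
    simp only [subst]
    split_ifs <;> (try simp only [subst]) <;> (try split_ifs) <;> first | rfl | omega | (exfalso; omega) | (congr 1; omega) | (rw [subst_lift])
  | lam M ih =>
    intro j k B N hjk
    simp only [subst]
    rw [ih (j+1) (k+1) (lift 0 B) (lift 0 N) (by omega),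
      lift_subst B 0 k N (Nat.zero_le k), lift_lift N 0 j (Nat.zero_le j)]
  | app A B' ihA ihB =>
    intro j k B N hjk
    simp only [subst, ihA j k B N hjk, ihB j k B N hjk]

end Tm

/-- Substitution preserves head steps. -/
theorem head_subst {P P' : Tm} (h : Head P P') :
    ∀ k N, Head (P.subst k N) (P'.subst k N) := by
  induction h with
  | beta A B =>
    intro k N
    simp only [Tm.subst]
    rw [Tm.subst_subst A 0 k B N (Nat.zero_le k)]
    exact Head.beta _ _
  | lam h ih =>
    intro k N
    exact Head.lam (ih (k+1) (Tm.lift 0 N))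
  | appL h ih =>
    intro k N
    exact Head.appL (ih k N)

/-- Diamond (up to equality) for head reduction. -/
theorem head_diamond {M M₁ M₂ : Tm} (h₁ : Head M M₁) (h₂ : Head M M₂) :
    M₁ = M₂ ∨ ∃ U, Head M₁ U ∧ Head M₂ U := by
  induction h₁ generalizing M₂ with
  | beta P Q =>
    cases h₂ with
    | beta => left; rfl
    | appL h =>
      cases h with
      | lam h' => exact Or.inr ⟨_, head_subst h' 0 Q, Head.beta _ _⟩
  | lam h ih =>
    cases h₂ with
    | lam h' =>
      rcases ih h' with rfl | ⟨U, hu1, hu2⟩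
      · left; rfl
      · exact Or.inr ⟨Tm.lam U, Head.lam hu1, Head.lam hu2⟩
  | @appL A A' B h ih =>
    cases h₂ with
    | beta =>
      cases h with
      | lam h' => exact Or.inr ⟨_, Head.beta _ _, head_subst h' 0 B⟩
    | appL h' =>
      rcases ih h' with rfl | ⟨U, hu1, hu2⟩
      · left; rfl
      · exact Or.inr ⟨Tm.app U _, Head.appL hu1, Head.appL hu2⟩

theorem unb_var {n : ℕ} {M' : Tm} (h : Unb (Tm.var n) M') : False := by
  cases h with
  | head h => cases h

theorem unb_app_shape {P Q M' : Tm} (h : Unb (Tm.app P Q) M')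
    (hn : ∀ s, ¬ Head (Tm.app P Q) s) :
    ∃ A B, M' = Tm.app A B := by
  cases h with
  | head h => exact (hn _ h).elim
  | appL _ _ => exact ⟨_, _, rfl⟩
  | appR _ _ => exact ⟨_, _, rfl⟩

/-- Reduction of a head-normal term stays head-normal. -/
theorem unb_noHead {M M' : Tm} (h : Unb M M') :
    (∀ s, ¬ Head M s) → (∀ s, ¬ Head M' s) := by
  induction h with
  | head h => intro hn; exact (hn _ h).elim
  | lam hn h ih =>
    intro hn' s hs
    cases hs with
    | lam h' => exact ih (fun t ht => hn _ (Head.lam ht)) _ h'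
  | @appL P P' Q hn h ih =>
    intro hn'
    have hP : ∀ t, ¬ Head P t := fun t ht => hn _ (Head.appL ht)
    cases P with
    | var n => exact (unb_var h).elim
    | lam X => exact ((hn _ (Head.beta X Q)).elim)
    | app A B =>
      obtain ⟨A', B', rfl⟩ := unb_app_shape h hP
      intro s hs
      cases hs with
      | appL h' => exact ih hP _ h'
  | @appR P Q Q' hn h ih =>
    intro hn' s hs
    cases hs with
    | beta A B => exact hn _ (Head.beta A Q)
    | appL h' => exact hn _ (Head.appL h')

/-- **RD-diamond for the Call-by-Name unbiased strategy**: if `M ⊳ M₁` and `M ⊳ M₂`,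
then either `M₁ = M₂` or there exists `U` with `M₁ ⊳ U` and `M₂ ⊳ U`. -/
theorem cbn_unbiased_RD_diamond (M M₁ M₂ : Tm) (h₁ : Unb M M₁) (h₂ : Unb M M₂) :
    M₁ = M₂ ∨ ∃ U : Tm, Unb M₁ U ∧ Unb M₂ U := by
  induction h₁ generalizing M₂ with
  | head h =>
    cases h₂ with
    | head h' =>
      rcases head_diamond h h' with rfl | ⟨U, hu1, hu2⟩
      · left; rfl
      · exact Or.inr ⟨U, Unb.head hu1, Unb.head hu2⟩
    | lam hn _ => exact (hn _ h).elim
    | appL hn _ => exact (hn _ h).elim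
    | appR hn _ => exact (hn _ h).elim
  | @lam P P₁ hn h ih =>
    cases h₂ with
    | head h' => exact (hn _ h').elim
    | @lam _ P₂ _ h' =>
      rcases ih _ h' with rfl | ⟨U, hu1, hu2⟩
      · left; rfl
      · refine Or.inr ⟨Tm.lam U, Unb.lam ?_ hu1, Unb.lam ?_ hu2⟩
        · exact unb_noHead (Unb.lam hn h) hn
        · exact unb_noHead (Unb.lam hn h') hn
  | @appL P P₁ Q hn h ih =>
    cases h₂ with
    | head h' => exact (hn _ h').elim
    | @appL _ P₂ _ _ h' =>
      rcases ih _ h' with rfl | ⟨U, hu1, hu2⟩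
      · left; rfl
      · refine Or.inr ⟨Tm.app U Q, Unb.appL ?_ hu1, Unb.appL ?_ hu2⟩
        · exact unb_noHead (Unb.appL hn h) hn
        · exact unb_noHead (Unb.appL hn h') hn
    | @appR _ _ Q₂ _ h' =>
      refine Or.inr ⟨Tm.app P₁ Q₂, Unb.appR ?_ h', Unb.appL ?_ h⟩
      · exact unb_noHead (Unb.appL hn h) hn
      · exact unb_noHead (Unb.appR hn h') hn
  | @appR P Q Q₁ hn h ih =>
    cases h₂ with
    | head h' => exact (hn _ h').elim
    | @appR _ _ Q₂ _ h' =>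
      rcases ih _ h' with rfl | ⟨U, hu1, hu2⟩
      · left; rfl
      · refine Or.inr ⟨Tm.app P U, Unb.appR ?_ hu1, Unb.appR ?_ hu2⟩
        · exact unb_noHead (Unb.appR hn h) hn
        · exact unb_noHead (Unb.appR hn h') hn
    | @appL _ P₂ _ _ h' =>
      refine Or.inr ⟨Tm.app P₂ Q₁, Unb.appL ?_ h', Unb.appR ?_ h⟩
      · exact unb_noHead (Unb.appR hn h) hn
      · exact unb_noHead (Unb.appL hn h') hn
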